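/- Let H be a tree-based hierarchy with canonical aggregation matrix A, positive initial predictions ŷ, and top-heavy weight matrices W(M). If item p is a top-level parent node (i.e., p is not a child in any constraint), then lim_{M→∞} y_p(M) = ŷ_p. -/
import Mathlib


open Matrix Filter Topology

/-- A tree-based hierarchy in canonical form on items `Fin N` with `K` constraints.
Constraint `k` has parent item `parent k` and nonempty child set `children k`;
each item is a child in at most one constraint, and the height function satisfies
`H(c) = H(p_k) - 1` (equivalently `H(p_k) = H(c) + 1`) for every child `c` of `p_k`. -/
structure TreeHierarchy (N K : ℕ) where
  parent : Fin K → Fin N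
  children : Fin K → Finset (Fin N)
  children_nonempty : ∀ k, (children k).Nonempty
  parent_notMem : ∀ k, parent k ∉ children k
  child_unique : ∀ k j : Fin K, ∀ n : Fin N, n ∈ children k → n ∈ children j → k = j
  height : Fin N → ℕ
  height_child : ∀ k : Fin K, ∀ c ∈ children k, height (parent k) = height c + 1

variable {N K : ℕ}

/-- The canonical aggregation matrix of a tree-based hierarchy:
`A k (p_k) = 1`, `A k c = -1` for `c ∈ C_k`, and `0` otherwise. -/
noncomputable def aggMatrix (T : TreeHierarchy N K) : Matrix (Fin K) (Fin N) ℝ :=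
  fun k n => if n = T.parent k then 1 else if n ∈ T.children k then -1 else 0

/-- The top-heavy weight matrix: diagonal with entries `w_n(M) = M^(H n) / yhat n`. -/
noncomputable def topW (T : TreeHierarchy N K) (yhat : Fin N → ℝ) (M : ℝ) :
    Matrix (Fin N) (Fin N) ℝ :=
  Matrix.diagonal fun n => M ^ T.height n / yhat n

/-- `λ(M) = (A W(M)⁻¹ Aᵀ)⁻¹ A ŷ`. -/
noncomputable def lamTop (T : TreeHierarchy N K) (yhat : Fin N → ℝ) (M : ℝ) : Fin K → ℝ :=
  (aggMatrix T * (topW T yhat M)⁻¹ * (aggMatrix T)ᵀ)⁻¹.mulVec ((aggMatrix T).mulVec yhat)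

/-- `y(M) = ŷ - W(M)⁻¹ Aᵀ λ(M)`. -/
noncomputable def yTop (T : TreeHierarchy N K) (yhat : Fin N → ℝ) (M : ℝ) : Fin N → ℝ :=
  yhat - ((topW T yhat M)⁻¹ * (aggMatrix T)ᵀ).mulVec (lamTop T yhat M)

namespace TopLevelAux

open Real

/-- height of the parent of constraint `k` -/
noncomputable def hk (T : TreeHierarchy N K) (k : Fin K) : ℕ := T.height (T.parent k)

/-- maximal height -/
noncomputable def Hm (T : TreeHierarchy N K) : ℕ := Finset.univ.sup T.height

/-- the small positive exponent parameter -/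
noncomputable def al (T : TreeHierarchy N K) : ℝ := 1 / (2 * (Hm T + 1))

lemma al_pos (T : TreeHierarchy N K) : 0 < al T := by
  unfold al; positivity

lemma al_lt_one (T : TreeHierarchy N K) : al T < 1 := by
  unfold al
  rw [div_lt_one (by positivity)]
  have : (0:ℝ) ≤ (Hm T : ℝ) := Nat.cast_nonneg _
  linarith

lemma al_mul_height_lt_one (T : TreeHierarchy N K) (n : Fin N) :
    al T * T.height n < 1 := by
  have h1 : (T.height n : ℝ) ≤ Hm T := by
    exact_mod_cast Finset.le_sup (f := T.height) (Finset.mem_univ n)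
  have h2 : 0 < al T := al_pos T
  have h3 : al T * Hm T < 1 := by
    unfold al
    rw [div_mul_eq_mul_div, one_mul, div_lt_one (by positivity)]
    have : (0:ℝ) ≤ (Hm T : ℝ) := Nat.cast_nonneg _
    linarith
  nlinarith

/-- left scaling exponents -/
noncomputable def aE (T : TreeHierarchy N K) (k : Fin K) : ℝ := al T * hk T k

/-- right scaling exponents -/
noncomputable def bE (T : TreeHierarchy N K) (k : Fin K) : ℝ := (1 - al T) * hk T k - 1

/-- the matrix `B(M) = A W(M)⁻¹ Aᵀ` -/
noncomputable def Bm (T : TreeHierarchy N K) (yhat : Fin N → ℝ) (M : ℝ) :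
    Matrix (Fin K) (Fin K) ℝ :=
  aggMatrix T * (topW T yhat M)⁻¹ * (aggMatrix T)ᵀ

/-- the rescaled matrix `B''(M)` -/
noncomputable def Bp (T : TreeHierarchy N K) (yhat : Fin N → ℝ) (M : ℝ) :
    Matrix (Fin K) (Fin K) ℝ :=
  Matrix.diagonal (fun k => M ^ aE T k) * Bm T yhat M *
    Matrix.diagonal (fun k => M ^ bE T k)

/-- the limit matrix -/
noncomputable def Dl (T : TreeHierarchy N K) (yhat : Fin N → ℝ) :
    Matrix (Fin K) (Fin K) ℝ :=
  Matrix.diagonal fun k => ∑ c ∈ T.children k, yhat c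

lemma diag_rpow_inv (e : Fin K → ℝ) {M : ℝ} (hM : 0 < M) :
    (Matrix.diagonal fun k => M ^ e k)⁻¹ = Matrix.diagonal fun k => M ^ (-(e k)) := by
  apply Matrix.inv_eq_right_inv
  rw [Matrix.diagonal_mul_diagonal]
  have h1 : (fun i => M ^ e i * M ^ (-e i)) = fun _ => (1:ℝ) := by
    funext i; rw [← Real.rpow_add hM]; simp
  rw [h1, Matrix.diagonal_one]

lemma topW_inv (T : TreeHierarchy N K) (yhat : Fin N → ℝ) (hy : ∀ n, 0 < yhat n)
    {M : ℝ} (hM : 0 < M) :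
    (topW T yhat M)⁻¹
      = Matrix.diagonal fun n => yhat n * M ^ (-(T.height n : ℝ)) := by
  apply Matrix.inv_eq_right_inv
  rw [topW, Matrix.diagonal_mul_diagonal]
  have h1 : (fun n => M ^ T.height n / yhat n * (yhat n * M ^ (-(T.height n : ℝ))))
      = fun _ => (1:ℝ) := by
    funext n
    rw [Real.rpow_neg hM.le, Real.rpow_natCast]
    have := (hy n).ne'
    have h2 : (M:ℝ) ^ T.height n ≠ 0 := pow_ne_zero _ hM.ne'
    field_simp
  rw [h1, Matrix.diagonal_one]

lemma agg_ne_zero (T : TreeHierarchy N K) {k : Fin K} {n : Fin N}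
    (h : aggMatrix T k n ≠ 0) : n = T.parent k ∨ n ∈ T.children k := by
  by_contra hc
  push_neg at hc
  simp [aggMatrix, hc.1, hc.2] at h

lemma agg_child (T : TreeHierarchy N K) {k : Fin K} {n : Fin N}
    (h : n ∈ T.children k) : aggMatrix T k n = -1 := by
  have : n ≠ T.parent k := by rintro rfl; exact T.parent_notMem k h
  simp [aggMatrix, this, h]

lemma expo_diag (T : TreeHierarchy N K) {k : Fin K} {n : Fin N}
    (h : n ∈ T.children k) : aE T k + bE T k - (T.height n : ℝ) = 0 := by
  have hh : (hk T k : ℝ) = (T.height n : ℝ) + 1 := by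
    have := T.height_child k n h
    unfold hk
    push_cast [this]
    ring
  unfold aE bE
  rw [hh]; ring

lemma expo_neg (T : TreeHierarchy N K) {k j : Fin K} {n : Fin N}
    (hkn : n = T.parent k ∨ n ∈ T.children k)
    (hjn : n = T.parent j ∨ n ∈ T.children j)
    (hnot : ¬(k = j ∧ n ∈ T.children k)) :
    aE T k + bE T j - (T.height n : ℝ) < 0 := by
  have ha := al_pos T
  have hb := al_lt_one T
  rcases hkn with hkn | hkn <;> rcases hjn with hjn | hjn
  · -- n = parent k, n = parent j
    have h1 : (hk T k : ℝ) = (T.height n : ℝ) := by rw [hk, ← hkn]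
    have h2 : (hk T j : ℝ) = (T.height n : ℝ) := by rw [hk, ← hjn]
    unfold aE bE; rw [h1, h2]; ring_nf; linarith
  · -- n = parent k, n ∈ children j
    have h1 : (hk T k : ℝ) = (T.height n : ℝ) := by rw [hk, ← hkn]
    have h2 : (hk T j : ℝ) = (T.height n : ℝ) + 1 := by
      have := T.height_child j n hjn; unfold hk; push_cast [this]; ring
    unfold aE bE; rw [h1, h2]; ring_nf; linarith
  · -- n ∈ children k, n = parent j
    have h1 : (hk T k : ℝ) = (T.height n : ℝ) + 1 := by
      have := T.height_child k n hkn; unfold hk; push_cast [this]; ring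
    have h2 : (hk T j : ℝ) = (T.height n : ℝ) := by rw [hk, ← hjn]
    unfold aE bE; rw [h1, h2]; ring_nf; linarith
  · -- n ∈ both children sets : forces k = j, contradiction
    exact absurd ⟨T.child_unique k j n hkn hjn, hkn⟩ hnot

lemma Bp_apply (T : TreeHierarchy N K) (yhat : Fin N → ℝ) (hy : ∀ n, 0 < yhat n)
    {M : ℝ} (hM : 0 < M) (k j : Fin K) :
    Bp T yhat M k j
      = ∑ n, aggMatrix T k n * aggMatrix T j n * yhat n *
          M ^ (aE T k + bE T j - (T.height n : ℝ)) := by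
  unfold Bp Bm
  rw [topW_inv T yhat hy hM]
  rw [Matrix.mul_diagonal, Matrix.diagonal_mul]
  rw [Matrix.mul_apply]
  rw [Finset.mul_sum, Finset.sum_mul]
  refine Finset.sum_congr rfl fun n _ => ?_
  rw [Matrix.mul_diagonal, Matrix.transpose_apply]
  have : M ^ aE T k * M ^ (-(T.height n : ℝ)) * M ^ bE T j
      = M ^ (aE T k + bE T j - (T.height n : ℝ)) := by
    rw [← Real.rpow_add hM, ← Real.rpow_add hM]
    ring_nf
  rw [← this]; ring

lemma tendsto_Bp (T : TreeHierarchy N K) (yhat : Fin N → ℝ) (hy : ∀ n, 0 < yhat n)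
    (k j : Fin K) :
    Tendsto (fun M => Bp T yhat M k j) atTop (𝓝 (Dl T yhat k j)) := by
  have hev : ∀ᶠ M : ℝ in atTop,
      Bp T yhat M k j
        = ∑ n, aggMatrix T k n * aggMatrix T j n * yhat n *
            M ^ (aE T k + bE T j - (T.height n : ℝ)) := by
    filter_upwards [eventually_gt_atTop (0:ℝ)] with M hM
    exact Bp_apply T yhat hy hM k j
  rw [tendsto_congr' hev]
  have hDl : Dl T yhat k j
      = ∑ n, (if k = j ∧ n ∈ T.children k then yhat n else 0) := by
    by_cases hkj : k = j
    · subst hkj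
      rw [Dl, Matrix.diagonal_apply_eq]
      simp [Finset.sum_ite_mem]
    · simp [Dl, Matrix.diagonal_apply_ne _ hkj, hkj]
  rw [hDl]
  apply tendsto_finset_sum
  intro n _
  by_cases hc : k = j ∧ n ∈ T.children k
  · obtain ⟨rfl, hmem⟩ := hc
    have hA : aggMatrix T k n = -1 := agg_child T hmem
    have he : aE T k + bE T k - (T.height n : ℝ) = 0 := expo_diag T hmem
    simp only [hA, he, Real.rpow_zero, hmem, and_self, if_true]
    simpa using tendsto_const_nhds
  · simp only [hc, if_false]
    by_cases hz : aggMatrix T k n = 0 ∨ aggMatrix T j n = 0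
    · have : ∀ M : ℝ, aggMatrix T k n * aggMatrix T j n * yhat n *
          M ^ (aE T k + bE T j - (T.height n : ℝ)) = 0 := by
        intro M; rcases hz with h | h <;> rw [h] <;> ring
      simpa [this] using tendsto_const_nhds
    · push_neg at hz
      have he : aE T k + bE T j - (T.height n : ℝ) < 0 :=
        expo_neg T (agg_ne_zero T hz.1) (agg_ne_zero T hz.2) hc
      have h0 : Tendsto (fun M : ℝ => M ^ (aE T k + bE T j - (T.height n : ℝ)))
          atTop (𝓝 0) := by
        have := tendsto_rpow_neg_atTop (y := -(aE T k + bE T j - (T.height n : ℝ)))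
          (by linarith)
        simpa using this
      have := (h0.const_mul (aggMatrix T k n * aggMatrix T j n * yhat n))
      simpa [mul_comm, mul_assoc, mul_left_comm] using this

lemma det_Dl_ne (T : TreeHierarchy N K) (yhat : Fin N → ℝ) (hy : ∀ n, 0 < yhat n) :
    (Dl T yhat).det ≠ 0 := by
  rw [Dl, Matrix.det_diagonal]
  refine Finset.prod_ne_zero_iff.2 fun k _ => ?_
  exact (Finset.sum_pos (fun c _ => hy c) (T.children_nonempty k)).ne'

lemma tendsto_Bp_inv (T : TreeHierarchy N K) (yhat : Fin N → ℝ) (hy : ∀ n, 0 < yhat n)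
    (k j : Fin K) :
    Tendsto (fun M => (Bp T yhat M)⁻¹ k j) atTop (𝓝 ((Dl T yhat)⁻¹ k j)) := by
  have hmat : Tendsto (fun M => Bp T yhat M) atTop (𝓝 (Dl T yhat)) :=
    tendsto_pi_nhds.2 fun a => tendsto_pi_nhds.2 fun b => tendsto_Bp T yhat hy a b
  have hcont : ContinuousAt Inv.inv (Dl T yhat) := by
    apply continuousAt_matrix_inv
    rw [Ring.inverse_eq_inv']
    exact continuousAt_inv₀ (det_Dl_ne T yhat hy)
  have h2 := hcont.tendsto.comp hmat
  exact tendsto_pi_nhds.1 (tendsto_pi_nhds.1 h2 k) j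

end TopLevelAux

/-- With top-heavy weights, if `p` is a top-level parent node (not a child
in any constraint), then `y_p(M) → ŷ_p` as `M → ∞`. -/
theorem top_level_limit (T : TreeHierarchy N K) (yhat : Fin N → ℝ)
    (hy : ∀ n, 0 < yhat n)
    (hinv : ∀ M : ℝ, 0 < M →
      IsUnit (aggMatrix T * (topW T yhat M)⁻¹ * (aggMatrix T)ᵀ).det)
    (p : Fin N) (htop : ∀ k : Fin K, p ∉ T.children k) :
    Tendsto (fun M : ℝ => yTop T yhat M p) atTop (𝓝 (yhat p)) := by
  classical
  open TopLevelAux in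
  set v : Fin K → ℝ := (aggMatrix T).mulVec yhat with hv
  have hId : ∀ M : ℝ, 0 < M →
      yTop T yhat M p = yhat p -
        ∑ k, ∑ j, aggMatrix T k p * yhat p * v j * ((Bp T yhat M)⁻¹ k j)
          * M ^ (bE T k + aE T j - (T.height p : ℝ)) := by
    intro M hM
    have hDR : (Matrix.diagonal fun k : Fin K => M ^ bE T k) *
        (Matrix.diagonal fun k : Fin K => M ^ bE T k)⁻¹ = 1 := by
      rw [diag_rpow_inv _ hM, Matrix.diagonal_mul_diagonal]
      have h1 : (fun i : Fin K => M ^ bE T i * M ^ (-(bE T i))) = fun _ => (1:ℝ) := by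
        funext i; rw [← Real.rpow_add hM]; simp
      rw [h1, Matrix.diagonal_one]
    have hDL : (Matrix.diagonal fun k : Fin K => M ^ aE T k)⁻¹ *
        (Matrix.diagonal fun k : Fin K => M ^ aE T k) = 1 := by
      rw [diag_rpow_inv _ hM, Matrix.diagonal_mul_diagonal]
      have h1 : (fun i : Fin K => M ^ (-(aE T i)) * M ^ aE T i) = fun _ => (1:ℝ) := by
        funext i; rw [← Real.rpow_add hM]; simp
      rw [h1, Matrix.diagonal_one]
    have hBp_inv : (Bp T yhat M)⁻¹ =
        (Matrix.diagonal fun k : Fin K => M ^ bE T k)⁻¹ * ((Bm T yhat M)⁻¹ *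
          (Matrix.diagonal fun k : Fin K => M ^ aE T k)⁻¹) := by
      rw [Bp, Matrix.mul_inv_rev, Matrix.mul_inv_rev]
    have hBmInv : (Bm T yhat M)⁻¹ =
        (Matrix.diagonal fun k : Fin K => M ^ bE T k) * (Bp T yhat M)⁻¹ *
          (Matrix.diagonal fun k : Fin K => M ^ aE T k) := by
      rw [hBp_inv]
      simp only [← mul_assoc]
      rw [hDR, one_mul, mul_assoc, hDL, mul_one]
    have hlam : lamTop T yhat M = ((Bm T yhat M)⁻¹).mulVec v := rfl
    rw [yTop, Pi.sub_apply]
    congr 1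
    rw [hlam, hBmInv, topW_inv T yhat hy hM]
    simp only [Matrix.mulVec, dotProduct, Matrix.diagonal_mul, Matrix.mul_diagonal,
      Matrix.transpose_apply]
    refine Finset.sum_congr rfl fun k _ => ?_
    rw [Finset.mul_sum]
    refine Finset.sum_congr rfl fun j _ => ?_
    have hsplit : M ^ (bE T k + aE T j - (T.height p : ℝ))
        = M ^ bE T k * M ^ aE T j * M ^ (-(T.height p : ℝ)) := by
      rw [← Real.rpow_add hM, ← Real.rpow_add hM]
      ring_nf
    rw [hsplit]
    ring
  have hcorr : Tendsto (fun M : ℝ => ∑ k, ∑ j, aggMatrix T k p * yhat p * v j *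
      ((Bp T yhat M)⁻¹ k j) * M ^ (bE T k + aE T j - (T.height p : ℝ))) atTop (𝓝 0) := by
    have h0 : (0:ℝ) = ∑ _k : Fin K, ∑ _j : Fin K, (0:ℝ) := by simp
    rw [h0]
    refine tendsto_finset_sum _ fun k _ => tendsto_finset_sum _ fun j _ => ?_
    by_cases hz : aggMatrix T k p = 0
    · simpa [hz] using (tendsto_const_nhds : Tendsto (fun _ : ℝ => (0:ℝ)) atTop (𝓝 0))
    · have hp : p = T.parent k := (agg_ne_zero T hz).resolve_right fun h => htop k h
      have hke : (hk T k : ℝ) = (T.height p : ℝ) := by rw [hk, ← hp]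
      have h1 : al T * ((hk T j : ℕ) : ℝ) < 1 := al_mul_height_lt_one T (T.parent j)
      have h2 : (0:ℝ) ≤ al T * (hk T k : ℝ) :=
        mul_nonneg (al_pos T).le (Nat.cast_nonneg _)
      have he : bE T k + aE T j - (T.height p : ℝ) < 0 := by
        rw [← hke]; unfold bE aE; nlinarith
      have h0' : Tendsto (fun M : ℝ => M ^ (bE T k + aE T j - (T.height p : ℝ)))
          atTop (𝓝 0) := by
        simpa using tendsto_rpow_neg_atTop (y := -(bE T k + aE T j - (T.height p : ℝ)))
          (by linarith)
      have hBij := tendsto_Bp_inv T yhat hy k j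
      have := (hBij.const_mul (aggMatrix T k p * yhat p * v j)).mul h0'
      simpa [mul_assoc] using this
  have hf : Tendsto (fun M : ℝ => yhat p -
      ∑ k, ∑ j, aggMatrix T k p * yhat p * v j * ((Bp T yhat M)⁻¹ k j)
        * M ^ (bE T k + aE T j - (T.height p : ℝ))) atTop (𝓝 (yhat p - 0)) :=
    tendsto_const_nhds.sub hcorr
  rw [sub_zero] at hf
  refine hf.congr' ?_
  filter_upwards [eventually_gt_atTop (0:ℝ)] with M hM
  exact (hId M hM).symm
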